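/- Let H_i, H_j, H_R be finite-dimensional complex Hilbert spaces, let ψ, φ be unit vectors in H_i ⊗ H_j ⊗ H_R, let H be a Hermitian operator on H_i ⊗ H_j, and set X = tr_R |ψ⟩⟨φ| (an operator on H_i ⊗ H_j). Then (1/i)( ⟨φ| (H ⊗ 1_R) |ψ⟩ − ⟨ψ| (H ⊗ 1_R) |φ⟩ ) = 2 tr(H · Im X) ≤ 2 ‖H‖_HS · √( (tr|X|)² − (tr(Re X))² ), where ‖H‖_HS = √(tr(H²)) is the Hilbert–Schmidt norm. -/

import Mathlib

open Matrix
open scoped ComplexOrder Kronecker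

noncomputable section

/-- `Re X = (X + Xᴴ)/2`. -/
def matRe {m : Type*} (X : Matrix m m ℂ) : Matrix m m ℂ := (2⁻¹ : ℂ) • (X + Xᴴ)

/-- `Im X = (X - Xᴴ)/(2i)`. -/
def matIm {m : Type*} (X : Matrix m m ℂ) : Matrix m m ℂ :=
  ((2 * Complex.I)⁻¹ : ℂ) • (X - Xᴴ)

/-- The positive semidefinite square root of a positive semidefinite matrix
(Mathlib's former `Matrix.PosSemidef.sqrt`, removed since; same definition). -/
def Matrix.PosSemidef.sqrt {n 𝕜 : Type*} [Fintype n] [DecidableEq n] [RCLike 𝕜]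
    {A : Matrix n n 𝕜} (hA : A.PosSemidef) : Matrix n n 𝕜 :=
  hA.1.eigenvectorUnitary.1 * diagonal ((↑) ∘ (√·) ∘ hA.1.eigenvalues) *
  (star hA.1.eigenvectorUnitary : Matrix n n 𝕜)

/-- `tr |X|` where `|X| = √(X Xᴴ)`; this equals the sum of the singular values of `X`. -/
def traceAbs {m : Type*} [Fintype m] [DecidableEq m] (X : Matrix m m ℂ) : ℝ :=
  ((Matrix.posSemidef_self_mul_conjTranspose X).sqrt.trace).re

/-- The Hilbert–Schmidt norm `‖H‖_HS = √(tr (H²))` of a Hermitian matrix `H`. -/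
def hsNorm {m : Type*} [Fintype m] (H : Matrix m m ℂ) : ℝ :=
  Real.sqrt (((H * H).trace).re)

/-- The partial trace over `H_R` of the rank-one operator `|ψ⟩⟨φ|`, an operator on `H`:
`X p q = Σ_r ψ (p,r) · conj (φ (q,r))`. -/
def ptraceKetBra {m : Type*} {dR : ℕ} [Fintype m] (ψ φ : m × Fin dR → ℂ) :
    Matrix m m ℂ :=
  Matrix.of fun p q => ∑ r, ψ (p, r) * star (φ (q, r))

set_option linter.unusedSectionVars false
set_option linter.unusedVariables false

variable {m : Type*} [Fintype m] [DecidableEq m]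

lemma trace_conj_aux (Q D : Matrix m m ℂ) (hQ : Qᴴ * Q = 1) :
    (Q * D * Qᴴ).trace = D.trace := by
  rw [trace_mul_cycle, hQ, one_mul]

lemma conj_mul_conj (Q : Matrix m m ℂ) (hQ : Qᴴ * Q = 1) (d e : m → ℂ) :
    (Q * diagonal d * Qᴴ) * (Q * diagonal e * Qᴴ) = Q * diagonal (fun i => d i * e i) * Qᴴ := by
  have : Q * diagonal d * (Qᴴ * Q) * diagonal e * Qᴴ = Q * (diagonal d * diagonal e) * Qᴴ := by
    rw [hQ, mul_one, mul_assoc Q]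
  rw [diagonal_mul_diagonal] at this
  rw [← this]; noncomm_ring

lemma conj_conjTranspose (Q : Matrix m m ℂ) (d : m → ℝ) :
    (Q * diagonal (fun i => (d i : ℂ)) * Qᴴ)ᴴ = Q * diagonal (fun i => (d i : ℂ)) * Qᴴ := by
  rw [conjTranspose_mul, conjTranspose_mul, conjTranspose_conjTranspose,
    diagonal_conjTranspose, ← mul_assoc]
  congr 2
  ext i
  simp [Pi.star_def, Complex.conj_ofReal]

lemma sum_normSq_eq (A : Matrix m m ℂ) :
    ∑ p : m × m, ‖A p.1 p.2‖ ^ 2 = ((Aᴴ * A).trace).re := by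
  rw [Matrix.trace]
  simp only [Matrix.diag, Matrix.mul_apply, conjTranspose_apply]
  rw [← Finset.sum_product', Complex.re_sum, ← Equiv.sum_comp (Equiv.prodComm m m)]
  apply Finset.sum_congr rfl
  intro p _
  simp [Complex.mul_conj', ← Complex.sq_norm, mul_comm]
  norm_cast

lemma cs_trace (A B : Matrix m m ℂ) :
    ‖(A * B).trace‖ ≤
      Real.sqrt (((Aᴴ * A).trace).re) * Real.sqrt (((Bᴴ * B).trace).re) := by
  classical
  set u : EuclideanSpace ℂ (m × m) := WithLp.toLp 2 (fun p : m × m => (starRingEnd ℂ) (A p.1 p.2)) with hu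
  set v : EuclideanSpace ℂ (m × m) := WithLp.toLp 2 (fun p : m × m => B p.2 p.1) with hv
  have h1 : inner ℂ u v = (A * B).trace := by
    simp only [PiLp.inner_apply, RCLike.inner_apply, hu, hv, PiLp.toLp_apply, starRingEnd_self_apply]
    rw [Matrix.trace]
    simp only [Matrix.diag, Matrix.mul_apply]
    rw [← Finset.sum_product']
    simp [Finset.sum_comm, mul_comm]
  have h2 : ‖u‖ = Real.sqrt (((Aᴴ * A).trace).re) := by
    rw [EuclideanSpace.norm_eq, ← sum_normSq_eq A]
    congr 1
    apply Finset.sum_congr rfl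
    intro p _
    simp [hu]
  have h3 : ‖v‖ = Real.sqrt (((Bᴴ * B).trace).re) := by
    rw [EuclideanSpace.norm_eq, ← sum_normSq_eq B, ← Equiv.sum_comp (Equiv.prodComm m m)]
    rfl
  calc ‖(A * B).trace‖ = ‖inner ℂ u v‖ := by rw [h1]
    _ ≤ ‖u‖ * ‖v‖ := norm_inner_le_norm u v
    _ = _ := by rw [h2, h3]

lemma trace_unitary_mul_le (X V : Matrix m m ℂ) (hV : Vᴴ * V = 1) :
    ‖(V * X).trace‖ ≤ traceAbs X := by
  classical
  set hA := Matrix.posSemidef_self_mul_conjTranspose X with hAdef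
  set hHA : (X * Xᴴ).IsHermitian := hA.1 with hHAdef
  set Q : Matrix m m ℂ := (hHA.eigenvectorUnitary : Matrix m m ℂ) with hQdef
  set a : m → ℝ := hHA.eigenvalues with hadef
  have ha0 : ∀ i, 0 ≤ a i := fun i => hA.eigenvalues_nonneg i
  have hQ1 : Qᴴ * Q = 1 := by
    rw [← Matrix.star_eq_conjTranspose]
    exact (Unitary.mem_iff.mp hHA.eigenvectorUnitary.2).1
  have hspec : X * Xᴴ = Q * diagonal (fun i => (a i : ℂ)) * Qᴴ := by
    have := hHA.spectral_theorem
    rw [Unitary.conjStarAlgAut_apply, Matrix.star_eq_conjTranspose] at this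
    exact this
  -- quarter powers
  set g : m → ℝ := fun i => Real.sqrt (Real.sqrt (a i)) with hgdef
  set gp : m → ℝ := fun i => if a i = 0 then 0 else (g i)⁻¹ with hgpdef
  set R : Matrix m m ℂ := Q * diagonal (fun i => (g i : ℂ)) * Qᴴ with hRdef
  set Rp : Matrix m m ℂ := Q * diagonal (fun i => (gp i : ℂ)) * Qᴴ with hRpdef
  have hgg : ∀ i, g i * gp i = if a i = 0 then 0 else 1 := by
    intro i
    by_cases h : a i = 0
    · simp [hgpdef, h]
    · have : 0 < a i := lt_of_le_of_ne (ha0 i) (Ne.symm h)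
      have hg : 0 < g i := Real.sqrt_pos.mpr (Real.sqrt_pos.mpr this)
      simp [hgpdef, h, mul_inv_cancel₀ hg.ne']
  have hPX : R * Rp * X = X := by
    have hfun1 : (fun i => (g i : ℂ) * (gp i : ℂ)) = (fun i => (((if a i = 0 then (0:ℝ) else 1) : ℝ) : ℂ)) := by
      funext i
      push_cast [← hgg i]
      ring
    have hP : R * Rp = Q * diagonal (fun i => (((if a i = 0 then (0:ℝ) else 1) : ℝ) : ℂ)) * Qᴴ := by
      rw [hRdef, hRpdef, conj_mul_conj Q hQ1, hfun1]
    set P := R * Rp with hPdef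
    have hfun2 : (fun i => (((if a i = 0 then (0:ℝ) else 1) : ℝ) : ℂ) * (a i : ℂ)) = (fun i => ((a i : ℝ) : ℂ)) := by
      funext i
      by_cases h : a i = 0 <;> simp [h]
    have hfun3 : (fun i => (a i : ℂ) * (((if a i = 0 then (0:ℝ) else 1) : ℝ) : ℂ)) = (fun i => ((a i : ℝ) : ℂ)) := by
      funext i
      by_cases h : a i = 0 <;> simp [h]
    have hPA : P * (X * Xᴴ) = X * Xᴴ := by
      rw [hP, hspec, conj_mul_conj Q hQ1, hfun2]
    have hAP : (X * Xᴴ) * P = X * Xᴴ := by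
      rw [hP, hspec, conj_mul_conj Q hQ1, hfun3]
    have hPs : Pᴴ = P := by rw [hP]; exact conj_conjTranspose Q _
    have hN : (X - P * X) * (X - P * X)ᴴ = 0 := by
      rw [conjTranspose_sub, conjTranspose_mul, hPs]
      have h1 : X * (Xᴴ * P) = X * Xᴴ := by
        have := hAP; rwa [mul_assoc] at this
      have h2 : P * X * Xᴴ = X * Xᴴ := by
        have := hPA; rwa [← mul_assoc] at this
      have h3 : P * X * (Xᴴ * P) = X * Xᴴ := by
        rw [← mul_assoc, h2, hAP]
      rw [sub_mul, mul_sub, mul_sub, h1, h2, h3]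
      simp
    have := Matrix.self_mul_conjTranspose_eq_zero.mp hN
    have h4 : X - P * X = 0 := this
    linear_combination (norm := noncomm_ring) -h4
  -- trace computations
  have hRh : Rᴴ = R := by rw [hRdef]; exact conj_conjTranspose Q _
  have hRph : Rpᴴ = Rp := by rw [hRpdef]; exact conj_conjTranspose Q _
  have e1 : (((V * R)ᴴ * (V * R)).trace).re = ∑ i, Real.sqrt (a i) := by
    have h5 : (V * R)ᴴ * (V * R) = Rᴴ * (Vᴴ * V) * R := by
      rw [conjTranspose_mul]; noncomm_ring
    rw [h5, hV, mul_one, hRh, hRdef, conj_mul_conj Q hQ1, trace_conj_aux _ _ hQ1,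
      trace_diagonal]
    rw [Complex.re_sum]
    apply Finset.sum_congr rfl
    intro i _
    rw [← Complex.ofReal_mul, Complex.ofReal_re, hgdef]
    exact Real.mul_self_sqrt (Real.sqrt_nonneg _)
  have e2 : (((Rp * X)ᴴ * (Rp * X)).trace).re
      = ∑ i, (if a i = 0 then 0 else Real.sqrt (a i)) := by
    have h5 : (Rp * X)ᴴ * (Rp * X) = Xᴴ * ((Rp * Rp) * X) := by
      rw [conjTranspose_mul, hRph]; noncomm_ring
    rw [h5, Matrix.trace_mul_comm]
    have h6 : Rp * Rp * X * Xᴴ = (Rp * Rp) * (X * Xᴴ) := by noncomm_ring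
    rw [h6, hspec, hRpdef, conj_mul_conj Q hQ1, conj_mul_conj Q hQ1,
      trace_conj_aux _ _ hQ1, trace_diagonal]
    rw [Complex.re_sum]
    apply Finset.sum_congr rfl
    intro i _
    rw [← Complex.ofReal_mul, ← Complex.ofReal_mul, Complex.ofReal_re]
    by_cases h : a i = 0
    · simp [hgpdef, h]
    · have hpos : 0 < a i := lt_of_le_of_ne (ha0 i) (Ne.symm h)
      have hg2 : g i * g i = Real.sqrt (a i) := Real.mul_self_sqrt (Real.sqrt_nonneg _)
      simp only [hgpdef, h, if_false]
      rw [← mul_inv, hg2]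
      have hs : Real.sqrt (a i) ≠ 0 := (Real.sqrt_pos.mpr hpos).ne'
      rw [show a i = Real.sqrt (a i) * Real.sqrt (a i) from (Real.mul_self_sqrt (ha0 i)).symm]
      field_simp
      rw [Real.sqrt_sq (Real.sqrt_nonneg _)]
  have etr : traceAbs X = ∑ i, Real.sqrt (a i) := by
    have h7 : traceAbs X = ((Q * diagonal (fun i => ((Real.sqrt (a i) : ℝ) : ℂ)) * Qᴴ).trace).re := by
      unfold traceAbs Matrix.PosSemidef.sqrt; rfl
    rw [h7, trace_conj_aux _ _ hQ1, trace_diagonal, Complex.re_sum]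
    simp
  have hT0 : 0 ≤ ∑ i, Real.sqrt (a i) :=
    Finset.sum_nonneg fun i _ => Real.sqrt_nonneg _
  have hle2 : ∑ i, (if a i = 0 then 0 else Real.sqrt (a i)) ≤ ∑ i, Real.sqrt (a i) := by
    apply Finset.sum_le_sum
    intro i _
    by_cases h : a i = 0 <;> simp [h, Real.sqrt_nonneg]
  have htr : (V * X).trace = ((V * R) * (Rp * X)).trace := by
    have : (V * R) * (Rp * X) = V * (R * Rp * X) := by noncomm_ring
    rw [this, hPX]
  calc ‖(V * X).trace‖ = ‖((V * R) * (Rp * X)).trace‖ := by rw [htr]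
    _ ≤ Real.sqrt ((((V * R)ᴴ * (V * R)).trace).re) *
        Real.sqrt ((((Rp * X)ᴴ * (Rp * X)).trace).re) := cs_trace _ _
    _ ≤ Real.sqrt (∑ i, Real.sqrt (a i)) * Real.sqrt (∑ i, Real.sqrt (a i)) := by
        rw [e1, e2]
        exact mul_le_mul_of_nonneg_left (Real.sqrt_le_sqrt hle2) (Real.sqrt_nonneg _)
    _ = ∑ i, Real.sqrt (a i) := Real.mul_self_sqrt hT0
    _ = traceAbs X := etr.symm

lemma pairing {m : Type*} {dR : ℕ} [Fintype m] [DecidableEq m]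
    (H : Matrix m m ℂ) (ψ φ : m × Fin dR → ℂ) :
    star φ ⬝ᵥ ((H ⊗ₖ (1 : Matrix (Fin dR) (Fin dR) ℂ)).mulVec ψ)
      = (H * ptraceKetBra ψ φ).trace := by
  classical
  simp only [dotProduct, Matrix.mulVec, Matrix.trace, Matrix.diag, Matrix.mul_apply,
    ptraceKetBra, Matrix.of_apply, Pi.star_apply, Matrix.kroneckerMap_apply, Matrix.one_apply,
    Fintype.sum_prod_type, mul_ite, mul_one, mul_zero, ite_mul, zero_mul,
    Finset.sum_ite_eq, Finset.sum_ite_eq', Finset.mem_univ, if_true, Finset.mul_sum,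
    Finset.sum_mul]
  apply Finset.sum_congr rfl
  intro q _
  rw [Finset.sum_comm]
  apply Finset.sum_congr rfl
  intro p _
  apply Finset.sum_congr rfl
  intro r _
  ring


lemma matIm_isHermitian {m : Type*} (X : Matrix m m ℂ) : (matIm X).IsHermitian := by
  show (matIm X)ᴴ = matIm X
  rw [matIm, conjTranspose_smul, conjTranspose_sub, conjTranspose_conjTranspose]
  have hc : star ((2 * Complex.I)⁻¹ : ℂ) = -((2 * Complex.I)⁻¹ : ℂ) := by
    have h2I : ((2 : ℂ) * Complex.I)⁻¹ = -Complex.I / 2 := by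
      rw [mul_inv, Complex.inv_I]; ring
    rw [h2I, Complex.star_def]
    rw [map_div₀, map_neg, Complex.conj_I, Complex.conj_ofNat]
    ring
  rw [hc, neg_smul, ← smul_neg, neg_sub]


/-- Model `H_i ⊗ H_j ⊗ H_R` on `(Fin di × Fin dj) × Fin dR → ℂ` with inner product
`⟨φ, v⟩ = star φ ⬝ᵥ v`, and `H ⊗ 1_R` as the Kronecker product.  Let `ψ, φ` be unit
vectors, `H` Hermitian on `H_i ⊗ H_j`, and `X = tr_R |ψ⟩⟨φ|`.  Then
`(1/i)(⟨φ|(H ⊗ 1)|ψ⟩ − ⟨ψ|(H ⊗ 1)|φ⟩) = 2 tr (H · Im X)`, and this quantity is at most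
`2 ‖H‖_HS √((tr|X|)² − (tr (Re X))²)`. -/
theorem stmt17 {di dj dR : ℕ}
    (ψ φ : (Fin di × Fin dj) × Fin dR → ℂ)
    (hψ : star ψ ⬝ᵥ ψ = 1) (hφ : star φ ⬝ᵥ φ = 1)
    (H : Matrix (Fin di × Fin dj) (Fin di × Fin dj) ℂ) (hH : H.IsHermitian) :
    Complex.I⁻¹ *
        ((star φ ⬝ᵥ ((H ⊗ₖ (1 : Matrix (Fin dR) (Fin dR) ℂ)).mulVec ψ)) -
         (star ψ ⬝ᵥ ((H ⊗ₖ (1 : Matrix (Fin dR) (Fin dR) ℂ)).mulVec φ))) =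
      2 * (H * matIm (ptraceKetBra ψ φ)).trace ∧
    2 * ((H * matIm (ptraceKetBra ψ φ)).trace).re ≤
      2 * hsNorm H *
        Real.sqrt (traceAbs (ptraceKetBra ψ φ) ^ 2 -
          (((matRe (ptraceKetBra ψ φ)).trace).re) ^ 2) := by
  classical
  set X := ptraceKetBra ψ φ with hXdef
  constructor
  · have h1 := pairing H ψ φ
    have hadj : ptraceKetBra φ ψ = Xᴴ := by
      ext p q
      simp [ptraceKetBra, hXdef, conjTranspose_apply, mul_comm]
    have h2 : star ψ ⬝ᵥ ((H ⊗ₖ (1 : Matrix (Fin dR) (Fin dR) ℂ)).mulVec φ)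
        = (H * Xᴴ).trace := by rw [pairing H φ ψ, hadj]
    rw [← hXdef] at h1
    rw [h1, h2]
    have h3 : (H * matIm X).trace = (2 * Complex.I)⁻¹ * ((H * X).trace - (H * Xᴴ).trace) := by
      rw [matIm, Matrix.mul_smul, Matrix.trace_smul, Matrix.mul_sub, Matrix.trace_sub,
        smul_eq_mul]
    rw [h3]
    have h4 : (2 : ℂ) * (2 * Complex.I)⁻¹ = Complex.I⁻¹ := by
      rw [mul_inv, ← mul_assoc, mul_inv_cancel₀ (two_ne_zero), one_mul]
    rw [← mul_assoc, h4]
  · set M := matIm X with hMdef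
    have hM : M.IsHermitian := matIm_isHermitian X
    set U : Matrix (Fin di × Fin dj) (Fin di × Fin dj) ℂ := (hM.eigenvectorUnitary : Matrix (Fin di × Fin dj) (Fin di × Fin dj) ℂ) with hUdef
    set mu : (Fin di × Fin dj) → ℝ := hM.eigenvalues with hmudef
    have hU1 : Uᴴ * U = 1 := by
      rw [← Matrix.star_eq_conjTranspose]
      exact (Unitary.mem_iff.mp hM.eigenvectorUnitary.2).1
    have hU2 : U * Uᴴ = 1 := by
      rw [← Matrix.star_eq_conjTranspose]
      exact (Unitary.mem_iff.mp hM.eigenvectorUnitary.2).2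
    have hdiag : Uᴴ * M * U = diagonal (fun k => (mu k : ℂ)) := by
      have := hM.conjStarAlgAut_star_eigenvectorUnitary
      rw [Unitary.conjStarAlgAut_apply, Unitary.coe_star, star_star, Matrix.star_eq_conjTranspose] at this
      exact this
    set Y := Uᴴ * X * U with hYdef
    have hYim : matIm Y = diagonal (fun k => (mu k : ℂ)) := by
      rw [← hdiag, hMdef, hYdef, matIm, matIm, conjTranspose_mul, conjTranspose_mul,
        conjTranspose_conjTranspose]
      rw [Matrix.mul_smul, Matrix.smul_mul, Matrix.mul_sub, Matrix.sub_mul]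
      congr 1
      noncomm_ring
    have hYkk : ∀ k, (Y k k).im = mu k := by
      intro k
      have h5 : matIm Y k k = (mu k : ℂ) := by rw [hYim]; simp
      rw [matIm] at h5
      simp only [Matrix.smul_apply, Matrix.sub_apply, conjTranspose_apply, smul_eq_mul] at h5
      rw [Complex.star_def, Complex.sub_conj] at h5
      have hI : Complex.I ≠ 0 := Complex.I_ne_zero
      have h6 : ((Y k k).im : ℂ) = (mu k : ℂ) := by
        rw [← h5]
        field_simp
        push_cast
        ring
      exact_mod_cast h6
    have htrY : Y.trace = X.trace := by
      rw [hYdef, trace_mul_cycle, hU2, one_mul]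
    have hMspec : M = U * diagonal (fun k => (mu k : ℂ)) * Uᴴ := by
      have := hM.spectral_theorem
      rw [Unitary.conjStarAlgAut_apply, Matrix.star_eq_conjTranspose] at this
      exact this
    have hMM : ((Mᴴ * M).trace).re = ∑ k, mu k ^ 2 := by
      rw [hM.eq, hMspec, conj_mul_conj U hU1, trace_conj_aux _ _ hU1, trace_diagonal,
        Complex.re_sum]
      apply Finset.sum_congr rfl
      intro k _
      rw [← Complex.ofReal_mul, Complex.ofReal_re, sq]
    have hcs : ((H * M).trace).re ≤ hsNorm H * Real.sqrt (∑ k, mu k ^ 2) := by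
      calc ((H * M).trace).re ≤ ‖(H * M).trace‖ := Complex.re_le_norm _
        _ ≤ Real.sqrt (((Hᴴ * H).trace).re) * Real.sqrt (((Mᴴ * M).trace).re) := cs_trace H M
        _ = hsNorm H * Real.sqrt (∑ k, mu k ^ 2) := by rw [hH.eq, hMM]; rfl
    -- diagonal entries
    set c : (Fin di × Fin dj) → ℂ :=
      fun k => if Y k k = 0 then 1 else (‖Y k k‖ : ℂ) / Y k k with hcdef
    have hc1 : ∀ k, c k * Y k k = (‖Y k k‖ : ℂ) := by
      intro k
      by_cases h : Y k k = 0
      · simp [hcdef, h]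
      · rw [hcdef]
        simp only [h, if_false]
        field_simp
    have hcabs : ∀ k, ‖c k‖ = 1 := by
      intro k
      by_cases h : Y k k = 0
      · simp [hcdef, h]
      · rw [hcdef]
        simp only [h, if_false]
        rw [norm_div, Complex.norm_real, norm_norm]
        exact div_self (norm_ne_zero_iff.mpr h)
    have hccs : ∀ k, star (c k) * c k = 1 := by
      intro k
      have h9 : star (c k) * c k = (Complex.normSq (c k) : ℂ) := by
        rw [Complex.star_def, ← Complex.normSq_eq_conj_mul_self]
      rw [h9, Complex.normSq_eq_norm_sq, hcabs]
      norm_num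
    set V := U * diagonal c * Uᴴ with hVdef
    have hVh : Vᴴ = U * diagonal (star c) * Uᴴ := by
      rw [hVdef, conjTranspose_mul, conjTranspose_mul, conjTranspose_conjTranspose,
        diagonal_conjTranspose]
      noncomm_ring
    have hV : Vᴴ * V = 1 := by
      rw [hVh, hVdef, conj_mul_conj U hU1]
      have hfun : (fun i => (star c) i * c i) = fun _ => (1 : ℂ) := funext fun i => hccs i
      rw [hfun, diagonal_one, mul_one, hU2]
    have htrV : (V * X).trace = ∑ k, c k * Y k k := by
      have h10 : V * X = U * (diagonal c * (Uᴴ * X)) := by rw [hVdef]; noncomm_ring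
      rw [h10, Matrix.trace_mul_comm]
      have h11 : diagonal c * (Uᴴ * X) * U = diagonal c * Y := by rw [hYdef]; noncomm_ring
      rw [h11]
      simp [Matrix.trace, Matrix.diag, Matrix.mul_apply, Matrix.diagonal_apply, ite_mul,
        zero_mul, Finset.sum_ite_eq, Finset.mem_univ]
    have habsY0 : 0 ≤ ∑ k, ‖Y k k‖ :=
      Finset.sum_nonneg fun k _ => norm_nonneg _
    have hdsum : ∑ k, ‖Y k k‖ ≤ traceAbs X := by
      have h12 : (V * X).trace = ((∑ k, ‖Y k k‖ : ℝ) : ℂ) := by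
        rw [htrV]
        push_cast
        exact Finset.sum_congr rfl fun k _ => hc1 k
      calc ∑ k, ‖Y k k‖
          = ‖(V * X).trace‖ := by
            rw [h12, Complex.norm_real, Real.norm_of_nonneg habsY0]
        _ ≤ traceAbs X := trace_unitary_mul_le X V hV
    -- real arithmetic
    set T := traceAbs X with hTdef
    set sA := ∑ k, |(Y k k).re| with hsAdef
    set sB := ∑ k, |(Y k k).im| with hsBdef
    have hsA0 : 0 ≤ sA := Finset.sum_nonneg fun k _ => abs_nonneg _
    have hsB0 : 0 ≤ sB := Finset.sum_nonneg fun k _ => abs_nonneg _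
    have h14 : Real.sqrt (sA ^ 2 + sB ^ 2) ≤ ∑ k, ‖Y k k‖ := by
      have hw : Real.sqrt (sA ^ 2 + sB ^ 2)
          = ‖(sA : ℂ) + (sB : ℂ) * Complex.I‖ := by
        rw [Complex.norm_def, Complex.normSq_apply]
        simp
        ring_nf
      have hsum : ((sA : ℂ) + (sB : ℂ) * Complex.I)
          = ∑ k, (((|(Y k k).re| : ℝ) : ℂ) + ((|(Y k k).im| : ℝ) : ℂ) * Complex.I) := by
        rw [Finset.sum_add_distrib, ← Finset.sum_mul, hsAdef, hsBdef]
        push_cast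
        ring
      rw [hw, hsum]
      refine le_trans (norm_sum_le _ _) ?_
      apply Finset.sum_le_sum
      intro k _
      apply le_of_eq
      rw [Complex.norm_def, Complex.normSq_apply, Complex.norm_def, Complex.normSq_apply]
      simp [← sq]
    have hmusum : ∑ k, mu k ^ 2 ≤ sB ^ 2 := by
      have : ∀ k, mu k ^ 2 = |(Y k k).im| ^ 2 := by
        intro k
        rw [sq_abs, hYkk k]
      calc ∑ k, mu k ^ 2 = ∑ k, |(Y k k).im| ^ 2 := Finset.sum_congr rfl fun k _ => this k
        _ ≤ sB ^ 2 := Finset.sum_sq_le_sq_sum_of_nonneg fun k _ => abs_nonneg _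
    have hresum : (∑ k, (Y k k).re) ^ 2 ≤ sA ^ 2 := by
      rw [← sq_abs]
      exact pow_le_pow_left₀ (abs_nonneg _) (Finset.abs_sum_le_sum_abs _ _) 2
    have hAB : sA ^ 2 + sB ^ 2 ≤ T ^ 2 := by
      have h15 : Real.sqrt (sA ^ 2 + sB ^ 2) ^ 2 = sA ^ 2 + sB ^ 2 :=
        Real.sq_sqrt (add_nonneg (sq_nonneg sA) (sq_nonneg sB))
      have h16 : Real.sqrt (sA ^ 2 + sB ^ 2) ≤ T := le_trans h14 hdsum
      nlinarith [Real.sqrt_nonneg (sA ^ 2 + sB ^ 2)]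
    have hreX : ((matRe X).trace).re = ∑ k, (Y k k).re := by
      have h13 : (matRe X).trace = (2⁻¹ : ℂ) * (X.trace + star X.trace) := by
        rw [matRe, Matrix.trace_smul, Matrix.trace_add, Matrix.trace_conjTranspose, smul_eq_mul]
      rw [h13, Complex.star_def, Complex.add_conj]
      have h17 : (2⁻¹ : ℂ) * ((2 * (X.trace).re : ℝ) : ℂ) = (((X.trace).re : ℝ) : ℂ) := by
        push_cast
        ring
      rw [h17, Complex.ofReal_re, ← htrY, Matrix.trace, Complex.re_sum]
      rfl
    have hsumSq : ∑ k, mu k ^ 2 ≤ T ^ 2 - ((matRe X).trace).re ^ 2 := by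
      rw [hreX]
      nlinarith [hmusum, hresum, hAB]
    have hmono : Real.sqrt (∑ k, mu k ^ 2) ≤ Real.sqrt (T ^ 2 - ((matRe X).trace).re ^ 2) :=
      Real.sqrt_le_sqrt hsumSq
    have hfin : ((H * M).trace).re ≤ hsNorm H * Real.sqrt (T ^ 2 - ((matRe X).trace).re ^ 2) :=
      le_trans hcs (mul_le_mul_of_nonneg_left hmono (Real.sqrt_nonneg _))
    linarith
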